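/- arXiv:1806.03646 — 2 statements merged into one kernel-verified Lean document; each statement's English description precedes it below -/
import Mathlib

section
/- For any Boolean function f : {-1,1}^n → {-1,1}, the spectral entropy satisfies H[f] ≤ log₂(n+1) · (I[f] + 1), where H[f] = Σ_S f̂(S)² log₂(1/f̂(S)²) and I[f] = Σ_S |S| f̂(S)². -/
/-! By Gibbs' inequality, `H[f] ≤ ∑ S, f̂(S)² log₂ (1 / q S)` for any positive weights `q` of
total mass at most `∑ S, f̂(S)² = 1` (Parseval). The weights `q S = (n + 1)^-(|S| + 1)` turn the
right-hand side into exactly `log₂ (n + 1) · (I[f] + 1)`, and their total mass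
`(n + 2)^n / (n + 1)^(n + 1)` is at most `1` by Bernoulli's inequality. -/

open Finset Real

noncomputable def chi {n : ℕ} (S : Finset (Fin n)) (x : Fin n → Bool) : ℝ :=
  ∏ i ∈ S, (if x i then (1:ℝ) else -1)

noncomputable def coeff {n : ℕ} (f : (Fin n → Bool) → ℝ) (S : Finset (Fin n)) : ℝ :=
  (∑ x : Fin n → Bool, f x * chi S x) / 2 ^ n

noncomputable def spectralEntropy {n : ℕ} (f : (Fin n → Bool) → ℝ) : ℝ :=
  ∑ S : Finset (Fin n), (coeff f S) ^ 2 * Real.logb 2 (1 / (coeff f S) ^ 2)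

noncomputable def totalInfluence {n : ℕ} (f : (Fin n → Bool) → ℝ) : ℝ :=
  ∑ S : Finset (Fin n), (S.card : ℝ) * (coeff f S) ^ 2

noncomputable def minEntropy {n : ℕ} (f : (Fin n → Bool) → ℝ) : ℝ :=
  ⨅ S : Finset (Fin n), Real.logb 2 (1 / (coeff f S) ^ 2)

noncomputable def fVar {n : ℕ} (f : (Fin n → Bool) → ℝ) : ℝ := 1 - (coeff f ∅) ^ 2

def IsBoolean {n : ℕ} (f : (Fin n → Bool) → ℝ) : Prop := ∀ x, f x = 1 ∨ f x = -1

noncomputable def binEnt (x : ℝ) : ℝ :=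
  x * Real.logb 2 (1 / x) + (1 - x) * Real.logb 2 (1 / (1 - x))

noncomputable def l1Norm {n : ℕ} (f : (Fin n → Bool) → ℝ) : ℝ :=
  ∑ S : Finset (Fin n), |coeff f S|

noncomputable def tensor {n m : ℕ} (f : (Fin n → Bool) → ℝ) (g : (Fin m → Bool) → ℝ) :
    (Fin (n + m) → Bool) → ℝ :=
  fun x => f (fun i => x (Fin.castAdd m i)) * g (fun j => x (Fin.natAdd n j))

lemma sum_chi_mul_chi {n : ℕ} (x y : Fin n → Bool) :
    ∑ S : Finset (Fin n), chi S x * chi S y = if x = y then 2 ^ n else 0 := by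
  have hprod (S : Finset (Fin n)) :
      chi S x * chi S y = ∏ i ∈ S, (if x i = y i then 1 else -1 : ℝ) := by
    rw [chi, chi, ← prod_mul_distrib]
    refine prod_congr rfl fun i _ => ?_
    cases x i <;> cases y i <;> norm_num
  have hfactor (i : Fin n) :
      (1 + if x i = y i then 1 else -1 : ℝ) = if x i = y i then 2 else 0 := by
    split_ifs <;> norm_num
  simp_rw [hprod, ← powerset_univ, ← prod_one_add, hfactor, prod_ite_zero, funext_iff]
  simp

lemma sum_coeff_sq {n : ℕ} (f : (Fin n → Bool) → ℝ) :
    ∑ S : Finset (Fin n), coeff f S ^ 2 = (∑ x, f x ^ 2) / 2 ^ n := by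
  have hexpand (S : Finset (Fin n)) : (∑ x, f x * chi S x) ^ 2
      = ∑ x, ∑ y, f x * f y * (chi S x * chi S y) := by
    rw [sq, sum_mul_sum]
    exact sum_congr rfl fun x _ => sum_congr rfl fun y _ => by ring
  have horth : ∑ S : Finset (Fin n), (∑ x, f x * chi S x) ^ 2 = 2 ^ n * ∑ x, f x ^ 2 := by
    simp_rw [hexpand]
    rw [sum_comm]
    simp_rw [fun x => sum_comm (γ := Finset (Fin n)) (s := univ) (t := univ)
      (f := fun S y => f x * f y * (chi S x * chi S y)), ← mul_sum, sum_chi_mul_chi,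
      mul_ite, mul_zero, sum_ite_eq, mem_univ, if_true, mul_sum]
    exact sum_congr rfl fun x _ => by ring
  simp_rw [coeff, div_pow, ← sum_div, horth]
  field_simp

lemma IsBoolean.sum_coeff_sq {n : ℕ} {f : (Fin n → Bool) → ℝ} (hf : IsBoolean f) :
    ∑ S : Finset (Fin n), coeff f S ^ 2 = 1 := by
  have hsq (x : Fin n → Bool) : f x ^ 2 = 1 := by rcases hf x with h | h <;> simp [h]
  simp [_root_.sum_coeff_sq, hsq]

lemma mul_log_one_div_le {a q : ℝ} (ha : 0 ≤ a) (hq : 0 < q) :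
    a * log (1 / a) ≤ a * log (1 / q) + (q - a) := by
  rcases ha.eq_or_lt with rfl | ha
  · simpa using hq.le
  have hlog : log (q / a) ≤ q / a - 1 := log_le_sub_one_of_pos (div_pos hq ha)
  rw [log_div hq.ne' ha.ne'] at hlog
  simp only [one_div, log_inv]
  have := mul_le_mul_of_nonneg_left hlog ha.le
  rw [mul_sub_one, mul_div_cancel₀ _ ha.ne'] at this
  linarith

theorem sum_mul_logb_one_div_le {ι : Type*} [Fintype ι] {b : ℝ} (hb : 1 < b) {a q : ι → ℝ}
    (ha : ∀ i, 0 ≤ a i) (hq : ∀ i, 0 < q i) (hqa : ∑ i, q i ≤ ∑ i, a i) :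
    ∑ i, a i * logb b (1 / a i) ≤ ∑ i, a i * logb b (1 / q i) := by
  simp_rw [logb, ← mul_div_assoc, ← sum_div]
  gcongr ?_ / _
  · exact (log_pos hb).le
  calc ∑ i, a i * log (1 / a i) ≤ ∑ i, (a i * log (1 / q i) + (q i - a i)) :=
        sum_le_sum fun i _ => mul_log_one_div_le (ha i) (hq i)
    _ ≤ ∑ i, a i * log (1 / q i) := by
        rw [sum_add_distrib, sum_sub_distrib]
        linarith

lemma add_two_pow_le_add_one_pow_succ (n : ℕ) : ((n : ℝ) + 2) ^ n ≤ ((n : ℝ) + 1) ^ (n + 1) := by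
  have hbern := one_add_mul_le_pow (a := -1 / ((n : ℝ) + 2)) (by
    rw [neg_div, neg_le_neg_iff, div_le_iff₀ (by positivity)]; linarith) n
  have hbase : 1 + -1 / ((n : ℝ) + 2) = ((n : ℝ) + 1) / (n + 2) := by field_simp; ring
  have hlhs : 1 + n * (-1 / ((n : ℝ) + 2)) = 2 / (n + 2) := by field_simp; ring
  rw [hbase, hlhs, div_pow, div_le_div_iff₀ (by positivity) (by positivity)] at hbern
  have : (0 : ℝ) ≤ ((n : ℝ) + 2) ^ n := by positivity
  nlinarith [pow_succ ((n : ℝ) + 1) n, pow_succ ((n : ℝ) + 2) n]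

lemma sum_inv_pow_card_succ_le_one (n : ℕ) :
    ∑ S : Finset (Fin n), ((n : ℝ) + 1)⁻¹ ^ (S.card + 1) ≤ 1 := by
  have hbinom := Fin.sum_pow_mul_eq_add_pow (n := n) ((n : ℝ) + 1)⁻¹ 1
  simp only [one_pow, mul_one] at hbinom
  simp_rw [pow_succ, ← sum_mul, hbinom]
  have hbase : ((n : ℝ) + 1)⁻¹ + 1 = ((n : ℝ) + 2) / (n + 1) := by field_simp; ring
  rw [hbase, div_pow, div_mul_eq_mul_div, div_le_one (by positivity),
    mul_inv_le_iff₀ (by positivity), ← pow_succ]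
  exact add_two_pow_le_add_one_pow_succ n

theorem weak_FEI {n : ℕ} (f : (Fin n → Bool) → ℝ) (hf : IsBoolean f) :
    spectralEntropy f ≤ Real.logb 2 (n + 1) * (totalInfluence f + 1) := by
  set q : Finset (Fin n) → ℝ := fun S => ((n : ℝ) + 1)⁻¹ ^ (S.card + 1)
  have hlogq (S : Finset (Fin n)) : logb 2 (1 / q S) = (S.card + 1) * logb 2 (n + 1) := by
    simp only [q, one_div, inv_pow, inv_inv, logb_pow]
    push_cast; ring
  calc spectralEntropy f ≤ ∑ S, coeff f S ^ 2 * logb 2 (1 / q S) :=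
        sum_mul_logb_one_div_le one_lt_two (fun S => sq_nonneg _) (fun S => by positivity)
          (hf.sum_coeff_sq ▸ sum_inv_pow_card_succ_le_one n)
    _ = logb 2 (n + 1) * (totalInfluence f + ∑ S, coeff f S ^ 2) := by
        rw [totalInfluence, ← sum_add_distrib, mul_sum]
        exact sum_congr rfl fun S _ => by rw [hlogq]; ring
    _ = logb 2 (n + 1) * (totalInfluence f + 1) := by rw [hf.sum_coeff_sq]
end

section
/- Let s : ℕ → ℝ with s(n) = o(n) and suppose H[g] ≤ C·I[g] for every Boolean function g with H[g] ≥ s(n_g). Then H[f] ≤ C·I[f] for every Boolean function f (i.e., FEI holds in full). -/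
open Finset Real

lemma sgn_sq {n : ℕ} (x : Fin n → Bool) (i : Fin n) :
    (if x i then (1:ℝ) else -1) * (if x i then (1:ℝ) else -1) = 1 := by
  cases x i <;> norm_num

lemma chi_mul_chi {n : ℕ} (S T : Finset (Fin n)) (x : Fin n → Bool) :
    chi S x * chi T x = chi (symmDiff S T) x := by
  classical
  have h1 : chi S x * chi T x = chi (S ∪ T) x * chi (S ∩ T) x := by
    rw [chi, chi, chi, chi, Finset.prod_union_inter]
  have h2 : chi (S ∪ T) x = chi (symmDiff S T) x * chi (S ∩ T) x := by
    rw [chi, chi, chi, ← Finset.prod_sdiff (Finset.inter_subset_union (s := S) (t := T))]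
    congr 1
    · congr 1
      ext j
      simp [Finset.mem_sdiff, Finset.mem_union, Finset.mem_inter, Finset.mem_symmDiff]
      tauto
  have h3 : chi (S ∩ T) x * chi (S ∩ T) x = 1 := by
    rw [chi, ← Finset.prod_mul_distrib]
    exact Finset.prod_eq_one fun i _ => sgn_sq x i
  rw [h1, h2, mul_assoc, h3, mul_one]

lemma sum_chi {n : ℕ} (S : Finset (Fin n)) :
    ∑ x : Fin n → Bool, chi S x = if S = ∅ then (2:ℝ) ^ n else 0 := by
  classical
  by_cases hS : S = ∅
  · simp [hS, chi, Finset.card_univ]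
  · simp only [hS, if_false]
    obtain ⟨i, hi⟩ := Finset.nonempty_iff_ne_empty.mpr hS
    have hinv : Function.Involutive (fun x : Fin n → Bool => Function.update x i (!x i)) := by
      intro x
      funext j
      by_cases hj : j = i
      · subst hj; simp
      · simp [Function.update_of_ne hj]
    have key : ∀ x : Fin n → Bool, chi S (Function.update x i (!x i)) = - chi S x := by
      intro x
      rw [chi, chi, ← Finset.mul_prod_erase _ _ hi, ← Finset.mul_prod_erase _ _ hi]
      have h1 : ∀ j ∈ S.erase i,
          (if Function.update x i (!x i) j then (1:ℝ) else -1) = (if x j then (1:ℝ) else -1) := by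
        intro j hj
        rw [Function.update_of_ne (Finset.ne_of_mem_erase hj)]
      rw [Finset.prod_congr rfl h1]
      have : (if Function.update x i (!x i) i then (1:ℝ) else -1)
          = -(if x i then (1:ℝ) else -1) := by
        rw [Function.update_self]; cases x i <;> norm_num
      rw [this]; ring
    have := Equiv.sum_comp hinv.toPerm (chi S)
    have h2 : ∑ x : Fin n → Bool, chi S ((hinv.toPerm) x) = - ∑ x : Fin n → Bool, chi S x := by
      rw [← Finset.sum_neg_distrib]
      exact Finset.sum_congr rfl fun x _ => key x
    linarith [this, h2]

lemma sum_chi_mul {n : ℕ} (S T : Finset (Fin n)) :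
    ∑ x : Fin n → Bool, chi S x * chi T x = if S = T then (2:ℝ) ^ n else 0 := by
  classical
  simp_rw [chi_mul_chi]
  rw [sum_chi]
  congr 1
  simp only [eq_iff_iff]
  constructor
  · intro h; rwa [← Finset.bot_eq_empty, symmDiff_eq_bot] at h
  · intro h; rw [h, symmDiff_self]; rfl

lemma sum_chi_chi {n : ℕ} (x y : Fin n → Bool) :
    ∑ S : Finset (Fin n), chi S x * chi S y = if x = y then (2:ℝ) ^ n else 0 := by
  classical
  have h1 : ∀ S : Finset (Fin n), chi S x * chi S y
      = ∏ i ∈ S, ((if x i then (1:ℝ) else -1) * (if y i then (1:ℝ) else -1)) := by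
    intro S; rw [chi, chi, Finset.prod_mul_distrib]
  simp_rw [h1]
  have h2 : ∑ S ∈ (Finset.univ : Finset (Fin n)).powerset,
      ∏ i ∈ S, ((if x i then (1:ℝ) else -1) * (if y i then (1:ℝ) else -1))
      = ∏ i : Fin n, (((if x i then (1:ℝ) else -1) * (if y i then (1:ℝ) else -1)) + 1) := by
    rw [Finset.prod_add]
    apply Finset.sum_congr rfl
    intro t _
    simp
  rw [← Finset.powerset_univ, h2]
  by_cases hxy : x = y
  · subst hxy
    simp only [if_pos rfl]
    have : ∀ i : Fin n, ((if x i then (1:ℝ) else -1) * (if x i then (1:ℝ) else -1)) + 1 = 2 := by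
      intro i; cases x i <;> norm_num
    rw [Finset.prod_congr rfl (fun i _ => this i)]
    simp
  · simp only [hxy, if_false]
    obtain ⟨i, hi⟩ : ∃ i, x i ≠ y i := by
      by_contra h
      push_neg at h
      exact hxy (funext h)
    apply Finset.prod_eq_zero (Finset.mem_univ i)
    cases hx : x i <;> cases hy : y i <;> simp_all

lemma parseval {n : ℕ} (f : (Fin n → Bool) → ℝ) (hf : IsBoolean f) :
    ∑ S : Finset (Fin n), (coeff f S) ^ 2 = 1 := by
  classical
  have key : ∑ S : Finset (Fin n), (∑ x : Fin n → Bool, f x * chi S x) ^ 2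
      = (2:ℝ)^n * 2^n := by
    have h1 : ∀ S : Finset (Fin n), (∑ x : Fin n → Bool, f x * chi S x) ^ 2
        = ∑ x : Fin n → Bool, ∑ y : Fin n → Bool, (f x * f y) * (chi S x * chi S y) := by
      intro S
      rw [sq, Finset.sum_mul_sum]
      apply Finset.sum_congr rfl; intro x _
      apply Finset.sum_congr rfl; intro y _
      ring
    simp_rw [h1]
    rw [Finset.sum_comm]
    have h2 : ∀ x : Fin n → Bool, ∑ S : Finset (Fin n), ∑ y : Fin n → Bool,
        (f x * f y) * (chi S x * chi S y)
        = (f x)^2 * 2^n := by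
      intro x
      rw [Finset.sum_comm]
      have h3 : ∀ y : Fin n → Bool, ∑ S : Finset (Fin n), (f x * f y) * (chi S x * chi S y)
          = (f x * f y) * (if x = y then (2:ℝ)^n else 0) := by
        intro y
        rw [← Finset.mul_sum, sum_chi_chi]
      simp_rw [h3, mul_ite, mul_zero]
      rw [Finset.sum_ite_eq]
      rcases hf x with h | h <;> simp [h]
    simp_rw [h2]
    rw [← Finset.sum_mul]
    have h4 : ∑ x : Fin n → Bool, (f x)^2 = 2^n := by
      have : ∀ x : Fin n → Bool, (f x)^2 = 1 := by
        intro x; rcases hf x with h | h <;> simp [h]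
      rw [Finset.sum_congr rfl (fun x _ => this x)]
      simp [Finset.card_univ]
    rw [h4]
  have hpos : (0:ℝ) < 2^n := by positivity
  have : ∀ S : Finset (Fin n), (coeff f S)^2 = (∑ x : Fin n → Bool, f x * chi S x)^2 / (2^n * 2^n) := by
    intro S
    rw [coeff, div_pow, sq, sq]
  rw [Finset.sum_congr rfl (fun S _ => this S), ← Finset.sum_div, key]
  field_simp

def ptEquiv (n m : ℕ) : (Fin n → Bool) × (Fin m → Bool) ≃ (Fin (n + m) → Bool) where
  toFun p := Fin.addCases p.1 p.2
  invFun x := (fun i => x (Fin.castAdd m i), fun j => x (Fin.natAdd n j))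
  left_inv p := by
    ext i
    · simp [Fin.addCases_left]
    · simp [Fin.addCases_right]
  right_inv x := by
    funext i
    refine Fin.addCases (fun i => ?_) (fun j => ?_) i
    · simp [Fin.addCases_left]
    · simp [Fin.addCases_right]

lemma castAdd_ne_natAdd {n m : ℕ} (i : Fin n) (j : Fin m) :
    Fin.castAdd m i ≠ Fin.natAdd n j := by
  intro h
  have := congrArg Fin.val h
  simp [Fin.castAdd, Fin.natAdd] at this
  omega

def castEmb (n m : ℕ) : Fin n ↪ Fin (n+m) :=
  ⟨Fin.castAdd m, fun a b h => by
    apply Fin.ext; have := congrArg Fin.val h; simpa using this⟩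

def natEmb (n m : ℕ) : Fin m ↪ Fin (n+m) :=
  ⟨Fin.natAdd n, fun a b h => by
    apply Fin.ext; have := congrArg Fin.val h; simp [Fin.natAdd] at this; omega⟩

def setEquiv (n m : ℕ) : Finset (Fin n) × Finset (Fin m) ≃ Finset (Fin (n + m)) where
  toFun p := p.1.map (castEmb n m) ∪ p.2.map (natEmb n m)
  invFun U := (Finset.univ.filter (fun i => Fin.castAdd m i ∈ U),
               Finset.univ.filter (fun j => Fin.natAdd n j ∈ U))
  left_inv p := by
    ext i
    · simp only [Finset.mem_filter, Finset.mem_univ, true_and, Finset.mem_union,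
        Finset.mem_map, castEmb, Function.Embedding.coeFn_mk, natEmb]
      constructor
      · rintro (⟨a, ha, h⟩ | ⟨a, ha, h⟩)
        · rwa [← Fin.castAdd_injective n m h]
        · exact absurd h.symm (castAdd_ne_natAdd i a)
      · intro h; exact Or.inl ⟨i, h, rfl⟩
    · simp only [Finset.mem_filter, Finset.mem_univ, true_and, Finset.mem_union,
        Finset.mem_map, castEmb, Function.Embedding.coeFn_mk, natEmb]
      constructor
      · rintro (⟨a, ha, h⟩ | ⟨a, ha, h⟩)
        · exact absurd h (castAdd_ne_natAdd a i)
        · rwa [← (natEmb n m).injective h]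
      · intro h; exact Or.inr ⟨i, h, rfl⟩
  right_inv U := by
    ext i
    refine Fin.addCases (fun i => ?_) (fun j => ?_) i <;>
      simp only [Finset.mem_union, Finset.mem_map, Finset.mem_filter, Finset.mem_univ, true_and,
        castEmb, natEmb, Function.Embedding.coeFn_mk] <;>
      constructor
    · rintro (⟨a, ha, h⟩ | ⟨a, ha, h⟩)
      · rwa [← Fin.castAdd_injective n m h]
      · exact absurd h.symm (castAdd_ne_natAdd i a)
    · intro h; exact Or.inl ⟨i, h, rfl⟩
    · rintro (⟨a, ha, h⟩ | ⟨a, ha, h⟩)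
      · exact absurd h (castAdd_ne_natAdd a j)
      · rwa [← (natEmb n m).injective h]
    · intro h; exact Or.inr ⟨j, h, rfl⟩

lemma maps_disjoint {n m : ℕ} (S : Finset (Fin n)) (T : Finset (Fin m)) :
    Disjoint (S.map (castEmb n m)) (T.map (natEmb n m)) := by
  rw [Finset.disjoint_left]
  rintro a ha hb
  rw [Finset.mem_map] at ha hb
  obtain ⟨i, _, hi⟩ := ha
  obtain ⟨j, _, hj⟩ := hb
  exact castAdd_ne_natAdd i j (hi.trans hj.symm)

lemma setEquiv_card {n m : ℕ} (S : Finset (Fin n)) (T : Finset (Fin m)) :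
    ((setEquiv n m) (S, T)).card = S.card + T.card := by
  show (S.map (castEmb n m) ∪ T.map (natEmb n m)).card = _
  rw [Finset.card_union_of_disjoint (maps_disjoint S T), Finset.card_map, Finset.card_map]

lemma ptEquiv_castAdd {n m : ℕ} (y : Fin n → Bool) (z : Fin m → Bool) (i : Fin n) :
    (ptEquiv n m) (y, z) (Fin.castAdd m i) = y i := by
  simp [ptEquiv]

lemma ptEquiv_natAdd {n m : ℕ} (y : Fin n → Bool) (z : Fin m → Bool) (j : Fin m) :
    (ptEquiv n m) (y, z) (Fin.natAdd n j) = z j := by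
  simp [ptEquiv]

lemma setEquiv_apply {n m : ℕ} (S : Finset (Fin n)) (T : Finset (Fin m)) :
    (setEquiv n m) (S, T) = S.map (castEmb n m) ∪ T.map (natEmb n m) := rfl

lemma chi_setEquiv {n m : ℕ} (S : Finset (Fin n)) (T : Finset (Fin m))
    (y : Fin n → Bool) (z : Fin m → Bool) :
    chi ((setEquiv n m) (S, T)) ((ptEquiv n m) (y, z)) = chi S y * chi T z := by
  rw [setEquiv_apply, chi, Finset.prod_union (maps_disjoint S T), Finset.prod_map,
    Finset.prod_map, chi, chi]
  congr 1
  · refine Finset.prod_congr rfl fun i _ => ?_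
    show (if (ptEquiv n m) (y, z) ((castEmb n m) i) then (1:ℝ) else -1) = _
    have : (castEmb n m) i = Fin.castAdd m i := rfl
    rw [this, ptEquiv_castAdd]
  · refine Finset.prod_congr rfl fun j _ => ?_
    show (if (ptEquiv n m) (y, z) ((natEmb n m) j) then (1:ℝ) else -1) = _
    have : (natEmb n m) j = Fin.natAdd n j := rfl
    rw [this, ptEquiv_natAdd]

lemma tensor_ptEquiv {n m : ℕ} (f : (Fin n → Bool) → ℝ) (g : (Fin m → Bool) → ℝ)
    (y : Fin n → Bool) (z : Fin m → Bool) :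
    tensor f g ((ptEquiv n m) (y, z)) = f y * g z := by
  rw [tensor]
  congr 1
  · congr 1; funext i; rw [ptEquiv_castAdd]
  · congr 1; funext j; rw [ptEquiv_natAdd]
lemma coeff_tensor {n m : ℕ} (f : (Fin n → Bool) → ℝ) (g : (Fin m → Bool) → ℝ)
    (S : Finset (Fin n)) (T : Finset (Fin m)) :
    coeff (tensor f g) ((setEquiv n m) (S, T)) = coeff f S * coeff g T := by
  rw [coeff, coeff, coeff]
  have h1 : ∑ x : Fin (n+m) → Bool, tensor f g x * chi ((setEquiv n m) (S, T)) x
      = ∑ p : (Fin n → Bool) × (Fin m → Bool),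
          tensor f g ((ptEquiv n m) p) * chi ((setEquiv n m) (S, T)) ((ptEquiv n m) p) :=
    (Equiv.sum_comp (ptEquiv n m) _).symm
  rw [h1]
  have h2 : ∀ p : (Fin n → Bool) × (Fin m → Bool),
      tensor f g ((ptEquiv n m) p) * chi ((setEquiv n m) (S, T)) ((ptEquiv n m) p)
      = (f p.1 * chi S p.1) * (g p.2 * chi T p.2) := by
    rintro ⟨y, z⟩
    rw [tensor_ptEquiv, chi_setEquiv]
    ring
  rw [Finset.sum_congr rfl (fun p _ => h2 p), Fintype.sum_prod_type]
  simp only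
  rw [← Finset.sum_mul_sum, pow_add]
  field_simp

lemma tensor_boolean {n m : ℕ} {f : (Fin n → Bool) → ℝ} {g : (Fin m → Bool) → ℝ}
    (hf : IsBoolean f) (hg : IsBoolean g) : IsBoolean (tensor f g) := by
  intro x
  rcases hf (fun i => x (Fin.castAdd m i)) with h1 | h1 <;>
    rcases hg (fun j => x (Fin.natAdd n j)) with h2 | h2 <;>
    simp [tensor, h1, h2]

lemma entropy_term_mul (a b : ℝ) :
    (a * b) ^ 2 * Real.logb 2 (1 / (a * b) ^ 2)
    = b ^ 2 * (a ^ 2 * Real.logb 2 (1 / a ^ 2)) + a ^ 2 * (b ^ 2 * Real.logb 2 (1 / b ^ 2)) := by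
  by_cases ha : a = 0
  · simp [ha]
  by_cases hb : b = 0
  · simp [hb]
  have h : 1 / (a * b) ^ 2 = (1 / a ^ 2) * (1 / b ^ 2) := by
    field_simp
  rw [h, Real.logb_mul (by positivity) (by positivity)]
  ring

lemma tensor_entropy {n m : ℕ} {f : (Fin n → Bool) → ℝ} {g : (Fin m → Bool) → ℝ}
    (hf : IsBoolean f) (hg : IsBoolean g) :
    spectralEntropy (tensor f g) = spectralEntropy f + spectralEntropy g := by
  rw [spectralEntropy]
  rw [← Equiv.sum_comp (setEquiv n m)
    (fun U => (coeff (tensor f g) U) ^ 2 * Real.logb 2 (1 / (coeff (tensor f g) U) ^ 2))]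
  rw [Fintype.sum_prod_type]
  have h1 : ∀ (S : Finset (Fin n)) (T : Finset (Fin m)),
      (coeff (tensor f g) ((setEquiv n m) (S, T))) ^ 2
        * Real.logb 2 (1 / (coeff (tensor f g) ((setEquiv n m) (S, T))) ^ 2)
      = (coeff g T) ^ 2 * ((coeff f S) ^ 2 * Real.logb 2 (1 / (coeff f S) ^ 2))
        + (coeff f S) ^ 2 * ((coeff g T) ^ 2 * Real.logb 2 (1 / (coeff g T) ^ 2)) := by
    intro S T
    rw [coeff_tensor]
    exact entropy_term_mul _ _
  calc ∑ S : Finset (Fin n), ∑ T : Finset (Fin m),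
        (coeff (tensor f g) ((setEquiv n m) (S, T))) ^ 2
          * Real.logb 2 (1 / (coeff (tensor f g) ((setEquiv n m) (S, T))) ^ 2)
      = ∑ S : Finset (Fin n), ∑ T : Finset (Fin m),
        ((coeff g T) ^ 2 * ((coeff f S) ^ 2 * Real.logb 2 (1 / (coeff f S) ^ 2))
        + (coeff f S) ^ 2 * ((coeff g T) ^ 2 * Real.logb 2 (1 / (coeff g T) ^ 2))) := by
        exact Finset.sum_congr rfl fun S _ => Finset.sum_congr rfl fun T _ => h1 S T
    _ = spectralEntropy f + spectralEntropy g := by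
        simp_rw [Finset.sum_add_distrib]
        rw [spectralEntropy, spectralEntropy]
        congr 1
        · refine Finset.sum_congr rfl fun S _ => ?_
          rw [← Finset.sum_mul, parseval g hg, one_mul]
        · have e2 : ∀ S : Finset (Fin n), ∑ T : Finset (Fin m),
              (coeff f S) ^ 2 * ((coeff g T) ^ 2 * Real.logb 2 (1 / (coeff g T) ^ 2))
              = (coeff f S) ^ 2 * spectralEntropy g := by
            intro S; rw [← Finset.mul_sum, spectralEntropy]
          rw [Finset.sum_congr rfl fun S _ => e2 S, ← Finset.sum_mul, parseval f hf, one_mul]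
          rfl

lemma tensor_influence {n m : ℕ} (f : (Fin n → Bool) → ℝ) (g : (Fin m → Bool) → ℝ)
    (hf : IsBoolean f) (hg : IsBoolean g) :
    totalInfluence (tensor f g) = totalInfluence f + totalInfluence g := by
  rw [totalInfluence]
  rw [← Equiv.sum_comp (setEquiv n m)
    (fun U => (U.card : ℝ) * (coeff (tensor f g) U) ^ 2)]
  rw [Fintype.sum_prod_type]
  have h1 : ∀ (S : Finset (Fin n)) (T : Finset (Fin m)),
      ((((setEquiv n m) (S, T)).card : ℝ) * (coeff (tensor f g) ((setEquiv n m) (S, T))) ^ 2)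
      = (coeff g T) ^ 2 * ((S.card : ℝ) * (coeff f S) ^ 2)
        + (coeff f S) ^ 2 * ((T.card : ℝ) * (coeff g T) ^ 2) := by
    intro S T
    rw [coeff_tensor, setEquiv_card]
    push_cast
    ring
  rw [Finset.sum_congr rfl fun S (_ : S ∈ Finset.univ) =>
    Finset.sum_congr rfl fun T (_ : T ∈ Finset.univ) => h1 S T]
  simp_rw [Finset.sum_add_distrib]
  rw [totalInfluence, totalInfluence]
  congr 1
  · refine Finset.sum_congr rfl fun S _ => ?_
    rw [← Finset.sum_mul, parseval g hg, one_mul]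
  · have e2 : ∀ S : Finset (Fin n), ∑ T : Finset (Fin m),
        (coeff f S) ^ 2 * ((T.card : ℝ) * (coeff g T) ^ 2)
        = (coeff f S) ^ 2 * totalInfluence g := by
      intro S; rw [← Finset.mul_sum, totalInfluence]
    rw [Finset.sum_congr rfl fun S _ => e2 S, ← Finset.sum_mul, parseval f hf, one_mul]
    rfl

noncomputable def Max2 : (Fin 2 → Bool) → ℝ := fun x => if x 0 || x 1 then 1 else -1

lemma sum_fin2 (F : (Fin 2 → Bool) → ℝ) :
    ∑ x : Fin 2 → Bool, F x = ∑ p : Bool × Bool, F (fun i => if i = 0 then p.1 else p.2) := by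
  apply Fintype.sum_equiv ((piFinTwoEquiv (fun _ => Bool)).trans (Equiv.refl _)) _ _
  intro x
  congr 1
  funext i
  fin_cases i <;> simp

lemma coeff_Max2_empty : coeff Max2 (∅ : Finset (Fin 2)) = 1/2 := by
  rw [coeff, sum_fin2]
  rw [Fintype.sum_prod_type]
  simp [Fintype.sum_bool, chi, Max2]
  norm_num

lemma coeff_Max2_0 : coeff Max2 ({0} : Finset (Fin 2)) = 1/2 := by
  rw [coeff, sum_fin2, Fintype.sum_prod_type]
  simp [Fintype.sum_bool, chi, Max2]
  norm_num

lemma coeff_Max2_1 : coeff Max2 ({1} : Finset (Fin 2)) = 1/2 := by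
  rw [coeff, sum_fin2, Fintype.sum_prod_type]
  simp [Fintype.sum_bool, chi, Max2]
  norm_num

lemma coeff_Max2_01 : coeff Max2 ({0,1} : Finset (Fin 2)) = -(1/2) := by
  rw [coeff, sum_fin2, Fintype.sum_prod_type]
  simp [Fintype.sum_bool, chi, Max2, Finset.prod_insert, Finset.mem_singleton]
  norm_num

lemma univFin2 : (Finset.univ : Finset (Finset (Fin 2)))
    = {∅, {0}, {1}, {0,1}} := by decide

lemma logb_two_four : Real.logb 2 4 = 2 := by
  have : (4:ℝ) = 2 ^ (2:ℕ) := by norm_num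
  rw [this, Real.logb_pow, Real.logb_self_eq_one (by norm_num)]
  norm_num

lemma Max2_boolean : IsBoolean Max2 := by
  intro x; rw [Max2]; by_cases h : x 0 || x 1 <;> simp [h]

lemma Max2_entropy : spectralEntropy Max2 = 2 := by
  rw [spectralEntropy, univFin2]
  rw [Finset.sum_insert (by decide), Finset.sum_insert (by decide),
    Finset.sum_insert (by decide), Finset.sum_singleton]
  rw [coeff_Max2_empty, coeff_Max2_0, coeff_Max2_1, coeff_Max2_01]
  have h4 : 1 / ((1:ℝ)/2)^2 = 4 := by norm_num
  have h4' : 1 / (-((1:ℝ)/2))^2 = 4 := by norm_num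
  rw [h4, h4', logb_two_four]
  norm_num

lemma Max2_influence : totalInfluence Max2 = 1 := by
  rw [totalInfluence, univFin2]
  rw [Finset.sum_insert (by decide), Finset.sum_insert (by decide),
    Finset.sum_insert (by decide), Finset.sum_singleton]
  rw [coeff_Max2_empty, coeff_Max2_0, coeff_Max2_1, coeff_Max2_01]
  norm_num

noncomputable def const0 : (Fin 0 → Bool) → ℝ := fun _ => 1

lemma const0_boolean : IsBoolean const0 := fun _ => Or.inl rfl

lemma const0_entropy : spectralEntropy const0 = 0 := by
  rw [spectralEntropy]
  rw [Finset.univ_unique, Finset.sum_singleton]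
  have : coeff const0 (default : Finset (Fin 0)) = 1 := by
    rw [coeff]
    rw [Finset.univ_unique, Finset.sum_singleton]
    have h1 : chi (default : Finset (Fin 0)) (default : Fin 0 → Bool) = 1 := by
      have : (default : Finset (Fin 0)) = ∅ := rfl
      simp [this, chi]
    simp only [const0, one_mul, pow_zero, div_one]
    convert h1 using 2
  simp [this]

lemma const0_influence : totalInfluence const0 = 0 := by
  rw [totalInfluence, Finset.univ_unique, Finset.sum_singleton]
  have : (default : Finset (Fin 0)) = ∅ := rfl
  simp [this]

lemma coeff_sq_le_one {n : ℕ} (f : (Fin n → Bool) → ℝ) (hf : IsBoolean f)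
    (S : Finset (Fin n)) : (coeff f S) ^ 2 ≤ 1 := by
  have h := parseval f hf
  calc (coeff f S) ^ 2 ≤ ∑ T : Finset (Fin n), (coeff f T) ^ 2 :=
        Finset.single_le_sum (f := fun T => (coeff f T) ^ 2) (fun T _ => sq_nonneg _) (Finset.mem_univ S)
    _ = 1 := h

lemma entropy_nonneg {n : ℕ} (f : (Fin n → Bool) → ℝ) (hf : IsBoolean f) :
    0 ≤ spectralEntropy f := by
  rw [spectralEntropy]
  apply Finset.sum_nonneg
  intro S _
  by_cases hc : coeff f S = 0
  · simp [hc]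
  · have h1 : 0 < (coeff f S) ^ 2 := by positivity
    have h2 : (1:ℝ) ≤ 1 / (coeff f S) ^ 2 := by
      rw [le_div_iff₀ h1, one_mul]
      exact coeff_sq_le_one f hf S
    exact mul_nonneg (sq_nonneg _) (Real.logb_nonneg one_lt_two h2)

lemma maxpow (k : ℕ) : ∃ (m : ℕ) (g : (Fin m → Bool) → ℝ), IsBoolean g ∧ m = 2 * k ∧
    spectralEntropy g = 2 * k ∧ totalInfluence g = k := by
  induction k with
  | zero =>
      exact ⟨0, const0, const0_boolean, rfl, by simp [const0_entropy], by simp [const0_influence]⟩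
  | succ k ih =>
      obtain ⟨m, g, hb, hm, hHg, hIg⟩ := ih
      refine ⟨2 + m, tensor Max2 g, tensor_boolean Max2_boolean hb, by omega, ?_, ?_⟩
      · rw [tensor_entropy Max2_boolean hb, Max2_entropy, hHg]; push_cast; ring
      · rw [tensor_influence Max2 g Max2_boolean hb, Max2_influence, hIg]; push_cast; ring

lemma boost (n : ℕ) (f : (Fin n → Bool) → ℝ) (hf : IsBoolean f) (t k : ℕ) :
    ∃ (m : ℕ) (g : (Fin m → Bool) → ℝ), IsBoolean g ∧ m = t * n + 2 * k ∧
      spectralEntropy g = t * spectralEntropy f + 2 * k ∧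
      totalInfluence g = t * totalInfluence f + k := by
  induction t with
  | zero =>
      obtain ⟨m, g, hb, hm, hHg, hIg⟩ := maxpow k
      exact ⟨m, g, hb, by omega, by rw [hHg]; push_cast; ring, by rw [hIg]; push_cast; ring⟩
  | succ t ih =>
      obtain ⟨m, g, hb, hm, hHg, hIg⟩ := ih
      refine ⟨n + m, tensor f g, tensor_boolean hf hb, by subst hm; ring, ?_, ?_⟩
      · rw [tensor_entropy hf hb, hHg]; push_cast; ring
      · rw [tensor_influence f g hf hb, hIg]; push_cast; ring


set_option maxHeartbeats 1000000 in
theorem FEI_from_high_entropy (C : ℝ) (s : ℕ → ℝ)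
    (hs : Filter.Tendsto (fun n => s n / n) Filter.atTop (nhds 0))
    (hH : ∀ m (g : (Fin m → Bool) → ℝ), IsBoolean g → s m ≤ spectralEntropy g →
      spectralEntropy g ≤ C * totalInfluence g) :
    ∀ n (f : (Fin n → Bool) → ℝ), IsBoolean f →
      spectralEntropy f ≤ C * totalInfluence f := by
  intro n f hf
  have hH0 : 0 ≤ spectralEntropy f := entropy_nonneg f hf
  refine le_of_forall_pos_le_add ?_
  intro δ hδ
  obtain ⟨B, hB⟩ : ∃ B : ℝ, B = |C - 2| + 1 := ⟨_, rfl⟩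
  have hBpos : 0 < B := by rw [hB]; positivity
  have hCB : C - 2 ≤ B := le_trans (le_abs_self _) (by rw [hB]; linarith)
  obtain ⟨ε, hε⟩ : ∃ e : ℝ, e = min (1/2) (δ / (2 * B * (n + 1))) := ⟨_, rfl⟩
  have hεpos : 0 < ε := by
    rw [hε]
    apply lt_min
    · norm_num
    · positivity
  obtain ⟨M, hM⟩ := Metric.tendsto_atTop.mp hs ε hεpos
  obtain ⟨t, ht⟩ : ∃ t : ℕ, t = ⌈((M : ℝ) + 2) / ε⌉₊ + 1 := ⟨_, rfl⟩
  have htpos : 0 < t := by omega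
  have htr : (0:ℝ) < t := by exact_mod_cast htpos
  obtain ⟨k, hk⟩ : ∃ k : ℕ, k = ⌈ε * t * n⌉₊ + M + 1 := ⟨_, rfl⟩
  obtain ⟨m, g, hgb, hm, hgH, hgI⟩ := boost n f hf t k
  have hkM : M + 1 ≤ k := by omega
  have hmk2 : 2 * k ≤ m := by omega
  have hmM : M ≤ m := by omega
  have hm1 : 1 ≤ m := by omega
  have hmr : (m : ℝ) = t * n + 2 * k := by rw [hm]; push_cast; ring
  have hmpos : (0:ℝ) < m := by exact_mod_cast hm1
  have hsm : s m ≤ ε * m := by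
    have h1 := hM m hmM
    rw [Real.dist_eq, sub_zero] at h1
    have h2 : s m / m < ε := lt_of_abs_lt h1
    calc s m = (s m / m) * m := by field_simp
      _ ≤ ε * m := mul_le_mul_of_nonneg_right h2.le hmpos.le
  have hεtn : ε * t * n ≤ (k : ℝ) := by
    have h1 := Nat.le_ceil (ε * t * n)
    have h2 : (⌈ε * t * n⌉₊ : ℝ) ≤ k := by
      have : ⌈ε * t * n⌉₊ ≤ k := by omega
      exact_mod_cast this
    linarith
  have hεhalf : ε ≤ 1/2 := hε ▸ min_le_left _ _
  have hmk : ε * m ≤ 2 * k := by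
    have h1 : ε * (2 * k) ≤ (1/2) * (2 * k) := by
      apply mul_le_mul_of_nonneg_right hεhalf
      positivity
    rw [hmr]
    nlinarith
  have happ := hH m g hgb (by
    rw [hgH]
    have h1 : (0:ℝ) ≤ (t : ℝ) * spectralEntropy f :=
      mul_nonneg (by positivity) hH0
    linarith)
  rw [hgH, hgI] at happ
  have key : spectralEntropy f ≤ C * totalInfluence f + (C - 2) * ((k : ℝ) / t) := by
    have h1 : spectralEntropy f - C * totalInfluence f ≤ (C - 2) * ((k : ℝ) / t) := by
      rw [← mul_div_assoc, le_div_iff₀ htr]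
      nlinarith [happ]
    linarith
  have hktpos : (0:ℝ) ≤ (k : ℝ) / t := by positivity
  have hkt : (k : ℝ) / t ≤ ε * (n + 1) := by
    rw [div_le_iff₀ htr]
    have h1 : (k : ℝ) ≤ ε * t * n + (M + 2) := by
      have h2 : (⌈ε * t * n⌉₊ : ℝ) < ε * t * n + 1 := Nat.ceil_lt_add_one (by positivity)
      have h3 : (k : ℝ) = (⌈ε * t * n⌉₊ : ℝ) + M + 1 := by rw [hk]; push_cast; ring
      linarith
    have h4 : (M : ℝ) + 2 ≤ ε * t := by
      have h5 : ((M : ℝ) + 2) / ε ≤ (⌈((M : ℝ) + 2) / ε⌉₊ : ℝ) := Nat.le_ceil _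
      have h6 : (⌈((M : ℝ) + 2) / ε⌉₊ : ℝ) ≤ t := by
        rw [ht]; push_cast; linarith
      rw [div_le_iff₀ hεpos] at h5
      nlinarith
    nlinarith
  have hεδ : ε ≤ δ / (2 * B * (n + 1)) := hε ▸ min_le_right _ _
  have hfin : (C - 2) * ((k : ℝ) / t) ≤ δ := by
    have h1 : (C - 2) * ((k : ℝ) / t) ≤ B * ((k : ℝ) / t) :=
      mul_le_mul_of_nonneg_right hCB hktpos
    have h2 : B * ((k : ℝ) / t) ≤ B * (ε * (n + 1)) :=
      mul_le_mul_of_nonneg_left hkt hBpos.le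
    have h3 : ε * (n + 1) ≤ δ / (2 * B) := by
      have h4 : ε * (n + 1) ≤ (δ / (2 * B * (n + 1))) * (n + 1) :=
        mul_le_mul_of_nonneg_right hεδ (by positivity)
      have h5 : (δ / (2 * B * (n + 1))) * (n + 1) = δ / (2 * B) := by
        field_simp
      linarith
    have h6 : B * (ε * (n + 1)) ≤ B * (δ / (2 * B)) :=
      mul_le_mul_of_nonneg_left h3 hBpos.le
    have h7 : B * (δ / (2 * B)) = δ / 2 := by
      field_simp
    linarith
  linarith
end
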